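/- arXiv:1801.07238 — 6 statements merged into one kernel-verified Lean document; each statement's English description precedes it below -/
import Mathlib

section
/- Let a, b, c be three non-collinear points in the plane. If O is the midpoint of the segment ac, then O is an admissible center for {a,b,c}: the set {a, b, c, 2O - b} is in convex position (a and c are fixed by the reflection). -/
/-!
The fourth point is `d = a - b + c`, so `a, b, c, d` is a parallelogram. Since `a, b, c` are
affinely independent in the plane, an affine function `f` can take arbitrary values at `a, b, c`,
and then `f d = f a - f b + f c`. A point `x` of a set `S` is extreme in its convex hull as soon
as some affine function attains its maximum over `S` only at `x`: the hull then lies in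
`{x} ∪ {f < f x}`, so removing `x` from it leaves the convex set `hull ∩ {f < f x}`. The values
`(1, 0, -1)`, `(0, 1, 0)`, `(-1, 0, 1)`, `(0, -1, 0)` at `(a, b, c)` single out `a, b, c, d`.
-/

noncomputable section

abbrev Pt := EuclideanSpace ℝ (Fin 2)

/-- A set of points is in convex position if every point is an extreme point
of the convex hull of the set. -/
def InConvexPos (S : Set Pt) : Prop :=
  ∀ p ∈ S, p ∈ Set.extremePoints ℝ (convexHull ℝ S)

/-- The reflection of the set `S` through the point `O`. -/
def reflSet (O : Pt) (S : Set Pt) : Set Pt := (fun x => (2 : ℝ) • O - x) '' S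

/-- `O` is an admissible center for `S` if `S ∪ (2O - S)` is in convex position. -/
def AdmissibleCenter (O : Pt) (S : Set Pt) : Prop := InConvexPos (S ∪ reflSet O S)

/-- A set is in centrally symmetric convex position if it admits an admissible center. -/
def CSCPos (S : Set Pt) : Prop := ∃ O : Pt, AdmissibleCenter O S

section Extreme

variable {𝕜 E : Type*} [Field 𝕜] [LinearOrder 𝕜] [IsStrictOrderedRing 𝕜] [AddCommGroup E]
  [Module 𝕜 E]

theorem convex_setOf_eq_or_lt (f : E →ᵃ[𝕜] 𝕜) (x : E) :
    Convex 𝕜 {y | y = x ∨ f y < f x} := by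
  rw [convex_iff_forall_pos]
  intro y hy z hz s t hs ht hst
  obtain rfl : s = 1 - t := by linarith
  rcases hy with rfl | hy <;> rcases hz with rfl | hz
  · exact .inl (Convex.combo_self hst _)
  all_goals
    refine .inr ?_
    rw [Convex.combo_affine_apply hst, smul_eq_mul, smul_eq_mul]
    nlinarith

theorem mem_extremePoints_convexHull_of_exists_lt {S : Set E} {x : E} (hx : x ∈ S)
    (h : ∃ f : E →ᵃ[𝕜] 𝕜, ∀ y ∈ S, y ≠ x → f y < f x) :
    x ∈ (convexHull 𝕜 S).extremePoints 𝕜 := by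
  obtain ⟨f, hf⟩ := h
  have hsub : convexHull 𝕜 S ⊆ {y | y = x ∨ f y < f x} :=
    convexHull_min (fun y hy ↦ (eq_or_ne y x).imp id (hf y hy)) (convex_setOf_eq_or_lt f x)
  have hsdiff : convexHull 𝕜 S \ {x} = convexHull 𝕜 S ∩ {y | f y < f x} := by
    ext y
    constructor
    · rintro ⟨hy, hyx⟩
      exact ⟨hy, (hsub hy).resolve_left hyx⟩
    · rintro ⟨hy, hlt⟩
      exact ⟨hy, fun hyx ↦ hlt.ne (by rw [Set.mem_singleton_iff.1 hyx])⟩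
  rw [(convex_convexHull 𝕜 S).mem_extremePoints_iff_convex_sdiff, hsdiff]
  exact ⟨subset_convexHull 𝕜 S hx,
    (convex_convexHull 𝕜 S).inter ((convex_Iio (f x)).affine_preimage f)⟩

end Extreme

theorem AffineIndependent.exists_affineMap_apply_eq {ι k V P : Type*} [Fintype ι] [Field k]
    [AddCommGroup V] [Module k V] [FiniteDimensional k V] [AddTorsor V P] {p : ι → P}
    (hp : AffineIndependent k p) (hcard : Fintype.card ι = Module.finrank k V + 1) (w : ι → k) :
    ∃ f : P →ᵃ[k] k, ∀ i, f (p i) = w i := by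
  classical
  let B : AffineBasis ι k P := ⟨p, hp, hp.affineSpan_eq_top_iff_card_eq_finrank_add_one.2 hcard⟩
  refine ⟨(Fintype.linearCombination k w).toAffineMap.comp B.coords, fun i ↦ ?_⟩
  change (Fintype.linearCombination k w).toAffineMap.comp B.coords (B i) = w i
  simp [Fintype.linearCombination_apply, AffineBasis.coord_apply]

theorem two_smul_midpoint_sub {R E : Type*} [Ring R] [Invertible (2 : R)] [AddCommGroup E]
    [Module R E] (a b c : E) : (2 : R) • midpoint R a c - b = a - b + c := by
  rw [midpoint_eq_smul_add, smul_smul, mul_invOf_self, one_smul]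
  abel

theorem AffineMap.map_sub_add {k E F : Type*} [Ring k] [AddCommGroup E] [Module k E]
    [AddCommGroup F] [Module k F] (f : E →ᵃ[k] F) (a b c : E) :
    f (a - b + c) = f a - f b + f c := by
  rw [← vsub_eq_sub a b, ← vadd_eq_add, f.map_vadd, f.linearMap_vsub]
  rfl

theorem stmt5 (a b c : Pt) (hnc : ¬ Collinear ℝ {a, b, c}) :
    InConvexPos {a, b, c, (2 : ℝ) • (midpoint ℝ a c) - b} := by
  have hcard : Fintype.card (Fin 3) = Module.finrank ℝ Pt + 1 := by simp
  have weights (wa wb wc : ℝ) : ∃ f : Pt →ᵃ[ℝ] ℝ,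
      f a = wa ∧ f b = wb ∧ f c = wc ∧ f (a - b + c) = wa - wb + wc := by
    obtain ⟨f, hf⟩ := (affineIndependent_iff_not_collinear_set.2 hnc).exists_affineMap_apply_eq
      hcard ![wa, wb, wc]
    obtain ⟨ha, hb, hc⟩ : f a = wa ∧ f b = wb ∧ f c = wc := ⟨hf 0, hf 1, hf 2⟩
    exact ⟨f, ha, hb, hc, by rw [f.map_sub_add, ha, hb, hc]⟩
  rw [two_smul_midpoint_sub]
  intro x hx
  refine mem_extremePoints_convexHull_of_exists_lt hx ?_
  rcases hx with rfl | rfl | rfl | rfl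
  · exact (weights 1 0 (-1)).imp fun f ⟨ha, hb, hc, hd⟩ ↦ by simp [ha, hb, hc, hd]
  · exact (weights 0 1 0).imp fun f ⟨ha, hb, hc, hd⟩ ↦ by simp [ha, hb, hc, hd]
  · exact (weights (-1) 0 1).imp fun f ⟨ha, hb, hc, hd⟩ ↦ by simp [ha, hb, hc, hd]
  · exact (weights 0 (-1) 0).imp fun f ⟨ha, hb, hc, hd⟩ ↦ by simp [ha, hb, hc, hd]
end
end

section
/- Let a, b, c be non-collinear points and let O be a point lying strictly inside the triangle abc. If O is an admissible center for {a,b,c} (i.e., {a,b,c} ∪ {2O-a,2O-b,2O-c} is in convex position), then O lies in the closed medial triangle of abc, i.e., the triangle with vertices at the midpoints (a+b)/2, (b+c)/2, (c+a)/2. -/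
/-!
Write `O` in barycentric coordinates `(α, β, γ)` with respect to `a, b, c`; they are positive
because `O` is interior. If, say, `α > 1/2`, then `2O - a` has coordinates `(2α - 1, 2β, 2γ)`:
all nonnegative and at least two of them positive, so `2O - a` lies in the triangle without being
a vertex, and therefore is not an extreme point of the hull of `{a, b, c} ∪ (2O - {a, b, c})`.
Hence all three coordinates are at most `1/2`, which places `O` in the medial triangle, since
`αa + βb + γc = (1 - 2γ)·(a+b)/2 + (1 - 2α)·(b+c)/2 + (1 - 2β)·(c+a)/2`.
-/

noncomputable section

open Set

section Barycentric

variable {ι E : Type*} [AddCommGroup E] [Module ℝ E] (B : AffineBasis ι ℝ E)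

lemma AffineBasis.coord_two_smul_sub [DecidableEq ι] (O : E) (i j : ι) :
    B.coord j ((2 : ℝ) • O - B i) = 2 * B.coord j O - if j = i then 1 else 0 := by
  have hline : (2 : ℝ) • O - B i = AffineMap.lineMap (B i) O (2 : ℝ) := by
    rw [AffineMap.lineMap_apply_module]
    module
  rw [hline, AffineMap.apply_lineMap, B.coord_apply, AffineMap.lineMap_apply_module]
  simp only [smul_eq_mul]
  split_ifs <;> ring

lemma AffineBasis.two_smul_sub_mem_convexHull_diff_range [Nontrivial ι] {O : E}
    (hpos : ∀ j, 0 < B.coord j O) {i : ι} (hi : 1 / 2 < B.coord i O) :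
    (2 : ℝ) • O - B i ∈ convexHull ℝ (range B) \ range B := by
  classical
  refine ⟨?_, ?_⟩
  · rw [B.convexHull_eq_nonneg_coord]
    intro j
    rw [B.coord_two_smul_sub]
    split_ifs with hji
    · subst hji; linarith
    · linarith [hpos j]
  · rintro ⟨j, hj⟩
    by_cases hji : j = i
    · subst hji
      obtain ⟨k, hkj⟩ := exists_ne j
      have hk := B.coord_two_smul_sub O j k
      rw [← hj, B.coord_apply, if_neg hkj] at hk
      linarith [hpos k]
    · have h := B.coord_two_smul_sub O i i
      rw [← hj, B.coord_apply, if_neg (Ne.symm hji), if_pos rfl] at h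
      linarith

end Barycentric

lemma AdmissibleCenter.coord_le_half {ι : Type*} [Nontrivial ι] {B : AffineBasis ι ℝ Pt} {O : Pt}
    (hadm : AdmissibleCenter O (range B)) (hpos : ∀ j, 0 < B.coord j O) (i : ι) :
    B.coord i O ≤ 1 / 2 := by
  by_contra! hi
  obtain ⟨hmem, hnot⟩ := B.two_smul_sub_mem_convexHull_diff_range hpos hi
  have hext := hadm _ (Or.inr ⟨B i, mem_range_self i, rfl⟩)
  exact hnot <| extremePoints_convexHull_subset <|
    inter_extremePoints_subset_extremePoints_of_subset (convexHull_mono subset_union_left)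
      ⟨hmem, hext⟩

section Medial

variable {E : Type*} [AddCommGroup E] [Module ℝ E]

lemma smul_add_smul_add_smul_mem_convexHull {x y z : E} {u v w : ℝ} (hu : 0 ≤ u) (hv : 0 ≤ v)
    (hw : 0 ≤ w) (huvw : u + v + w = 1) :
    u • x + v • y + w • z ∈ convexHull ℝ {x, y, z} := by
  have h := (convex_convexHull ℝ ({x, y, z} : Set E)).sum_mem (t := Finset.univ)
    (w := ![u, v, w]) (z := ![x, y, z])
    (by intro i _; fin_cases i <;> assumption)
    (by simpa [Fin.sum_univ_three] using huvw)
    (by intro i _; fin_cases i <;> apply subset_convexHull <;> simp)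
  simpa [Fin.sum_univ_three] using h

lemma smul_add_smul_add_smul_mem_convexHull_midpoint {a b c : E} {α β γ : ℝ}
    (hsum : α + β + γ = 1) (hα : α ≤ 1 / 2) (hβ : β ≤ 1 / 2) (hγ : γ ≤ 1 / 2) :
    α • a + β • b + γ • c ∈
      convexHull ℝ {midpoint ℝ a b, midpoint ℝ b c, midpoint ℝ c a} := by
  have hmedial : α • a + β • b + γ • c = (1 - 2 * γ) • midpoint ℝ a b
      + (1 - 2 * α) • midpoint ℝ b c + (1 - 2 * β) • midpoint ℝ c a := by
    simp only [midpoint_eq_smul_add, invOf_eq_inv]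
    rw [show α = 1 - β - γ by linarith]
    module
  rw [hmedial]
  exact smul_add_smul_add_smul_mem_convexHull (by linarith) (by linarith) (by linarith)
    (by linarith)

end Medial

theorem stmt6 (a b c : Pt) (hnc : ¬ Collinear ℝ {a, b, c}) (O : Pt)
    (hO : O ∈ interior (convexHull ℝ {a, b, c}))
    (hadm : AdmissibleCenter O {a, b, c}) :
    O ∈ convexHull ℝ {midpoint ℝ a b, midpoint ℝ b c, midpoint ℝ c a} := by
  have hai : AffineIndependent ℝ ![a, b, c] := affineIndependent_iff_not_collinear_set.mpr hnc
  let B : AffineBasis (Fin 3) ℝ Pt :=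
    ⟨![a, b, c], hai, hai.affineSpan_eq_top_iff_card_eq_finrank_add_one.mpr (by simp)⟩
  have hrange : range B = {a, b, c} := by
    change range ![a, b, c] = _
    rw [Matrix.range_cons, Matrix.range_cons_cons_empty, singleton_union]
  rw [← hrange] at hO hadm
  have hpos : ∀ i, 0 < B.coord i O := by rwa [B.interior_convexHull] at hO
  have hhalf := hadm.coord_le_half hpos
  have hsum : B.coord 0 O + B.coord 1 O + B.coord 2 O = 1 := by
    rw [← Fin.sum_univ_three (fun i => B.coord i O), B.sum_coord_apply_eq_one]
  rw [← B.linear_combination_coord_eq_self O, Fin.sum_univ_three]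
  exact smul_add_smul_add_smul_mem_convexHull_midpoint hsum (hhalf 0) (hhalf 1) (hhalf 2)
end
end

section
/- Let a, b, c be non-collinear points and let O be a point in the plane such that {a,b,c} ∪ {2O-a, 2O-b, 2O-c} is in convex position. Then O does not lie in the interior of any of the three 'middle strip' regions: concretely, O lies either in the closed medial triangle of abc, or in one of the three closed outer regions cut off by the three lines through the midpoints of the sides (the lines through pairs of side-midpoints), each outer region being on the far side of such a line from the triangle. -/
noncomputable section

lemma key_strip (a b c : Pt) (hnc : ¬ Collinear ℝ {a, b, c}) (O : Pt)
    (α β γ : ℝ) (hsum : α + β + γ = 1) (hO : O = α • a + β • b + γ • c)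
    (hα : 1 / 2 < α) (hβ : β < 1 / 2) (hγ : γ < 1 / 2) :
    ¬ AdmissibleCenter O {a, b, c} := by
  intro hadm
  have hα0 : (0:ℝ) < α := by linarith
  have hK : (0:ℝ) < 2 * α - 1 := by linarith
  set S : Set Pt := {a, b, c} with hS
  set b' : Pt := (2:ℝ) • O - b with hb'
  set c' : Pt := (2:ℝ) • O - c with hc'
  have hb'mem : b' ∈ S ∪ reflSet O S := Or.inr ⟨b, by simp [hS], rfl⟩
  have hc'mem : c' ∈ S ∪ reflSet O S := Or.inr ⟨c, by simp [hS], rfl⟩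
  have hbmem : b ∈ S ∪ reflSet O S := Or.inl (by simp [hS])
  have hcmem : c ∈ S ∪ reflSet O S := Or.inl (by simp [hS])
  set t : ℝ := 1 / (2 * α) with ht
  have ht0 : 0 < t := by positivity
  have ht1 : t < 1 := by
    rw [ht, div_lt_one (by linarith)]; linarith
  set M : ℝ := max β 0 with hM
  set u : ℝ := 2 * M with hu
  have hu0 : 0 ≤ u := by positivity
  have hu1 : u ≤ 1 := by
    rcases max_cases β 0 with ⟨h1, _⟩ | ⟨h1, _⟩ <;> rw [hu, hM, h1] <;> linarith
  set v : ℝ := 2 * (M - β) / (2 * α - 1) with hv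
  have hv0 : 0 ≤ v := by
    apply div_nonneg _ hK.le
    have : β ≤ M := le_max_left _ _
    linarith
  have hv1 : v ≤ 1 := by
    rw [hv, div_le_one hK]
    rcases max_cases β 0 with ⟨h1, _⟩ | ⟨h1, h2⟩ <;> rw [hM, h1] <;> linarith
  set p : Pt := u • b' + (1 - u) • c' with hp
  set q : Pt := v • b + (1 - v) • c with hq
  have hpmem : p ∈ convexHull ℝ (S ∪ reflSet O S) :=
    segment_subset_convexHull hb'mem hc'mem ⟨u, 1 - u, hu0, by linarith, by ring, rfl⟩
  have hqmem : q ∈ convexHull ℝ (S ∪ reflSet O S) :=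
    segment_subset_convexHull hbmem hcmem ⟨v, 1 - v, hv0, by linarith, by ring, rfl⟩
  have hid : t • p + (1 - t) • q = a := by
    rw [hp, hq, hb', hc', hO, ht, hv]
    have hγ' : γ = 1 - α - β := by linarith
    subst hγ'
    match_scalars <;> field_simp <;> ring
  have haseg : a ∈ openSegment ℝ p q := ⟨t, 1 - t, ht0, by linarith, by ring, hid⟩
  have hext := hadm a (Or.inl (by simp [hS]))
  rw [mem_extremePoints] at hext
  have hqa : q = a := (hext.2 p hpmem q hqmem haseg).2
  apply hnc
  have hmem : a ∈ line[ℝ, c, b] := by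
    have : AffineMap.lineMap c b v = a := by
      rw [AffineMap.lineMap_apply_module, ← hqa, hq]; module
    rw [← this]
    exact AffineMap.lineMap_mem_affineSpan_pair _ _ _
  have h2 := collinear_insert_of_mem_affineSpan_pair hmem
  have hset : ({a, c, b} : Set Pt) = {a, b, c} := by ext x; simp; tauto
  rw [hS, ← hset]
  exact h2

theorem stmt7 (a b c : Pt) (hnc : ¬ Collinear ℝ {a, b, c}) (O : Pt)
    (hadm : AdmissibleCenter O {a, b, c}) :
    ∀ α β γ : ℝ, α + β + γ = 1 → O = α • a + β • b + γ • c →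
      (α ≤ 1 / 2 ∧ β ≤ 1 / 2 ∧ γ ≤ 1 / 2) ∨
      (1 / 2 ≤ α ∧ 1 / 2 ≤ β) ∨ (1 / 2 ≤ β ∧ 1 / 2 ≤ γ) ∨
      (1 / 2 ≤ γ ∧ 1 / 2 ≤ α) := by
  intro α β γ hsum hO
  by_cases h1 : 1 / 2 ≤ α ∧ 1 / 2 ≤ β; · tauto
  by_cases h2 : 1 / 2 ≤ β ∧ 1 / 2 ≤ γ; · tauto
  by_cases h3 : 1 / 2 ≤ γ ∧ 1 / 2 ≤ α; · tauto
  by_cases h4 : α ≤ 1 / 2 ∧ β ≤ 1 / 2 ∧ γ ≤ 1 / 2; · tauto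
  exfalso
  have hba : ({b, a, c} : Set Pt) = {a, b, c} := Set.insert_comm _ _ _
  have hca : ({c, a, b} : Set Pt) = {a, b, c} := by ext x; simp; tauto
  rcases le_or_gt α (1 / 2) with c1 | c1
  · rcases le_or_gt β (1 / 2) with c2 | c2
    · -- then γ > 1/2, and α < 1/2, β < 1/2
      have cγ : 1 / 2 < γ := by
        by_contra h; push_neg at h; exact h4 ⟨c1, c2, h⟩
      have cα : α < 1 / 2 := lt_of_not_ge fun h => h3 ⟨cγ.le, h⟩
      have cβ : β < 1 / 2 := lt_of_not_ge fun h => h2 ⟨h, cγ.le⟩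
      exact key_strip c a b (by rwa [hca]) O γ α β (by linarith)
        (by rw [hO]; module) cγ cα cβ (by rwa [hca])
    · -- β > 1/2, so α < 1/2, γ < 1/2
      have cα : α < 1 / 2 := lt_of_not_ge fun h => h1 ⟨h, c2.le⟩
      have cγ : γ < 1 / 2 := lt_of_not_ge fun h => h2 ⟨c2.le, h⟩
      exact key_strip b a c (by rwa [hba]) O β α γ (by linarith)
        (by rw [hO]; module) c2 cα cγ (by rwa [hba])
  · -- α > 1/2, so β < 1/2, γ < 1/2
    have cβ : β < 1 / 2 := lt_of_not_ge fun h => h1 ⟨c1.le, h⟩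
    have cγ : γ < 1 / 2 := lt_of_not_ge fun h => h3 ⟨h, c1.le⟩
    exact key_strip a b c hnc O α β γ hsum hO c1 cβ cγ hadm
end
end

section
/- Let Γ = ∂K for a compact convex set K ⊆ ℝ² with nonempty interior, and assume every 6-element subset of Γ is in centrally symmetric convex position. Let a ∈ Γ be a smooth point of Γ (there is a unique supporting line ℓ of K at a), and let b, c, d ∈ Γ be such that abcd is a nondegenerate parallelogram (a + c = b + d) whose sides are not parallel to ℓ. Then the line through c parallel to ℓ is a supporting line of K. -/
noncomputable section

/-- `u` is an outer supporting normal of `K` at the boundary point `p`. -/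
def IsSupportNormalAt (K : Set Pt) (u p : Pt) : Prop :=
  p ∈ K ∧ ∀ x ∈ K, (inner ℝ u x : ℝ) ≤ inner ℝ u p

/-!
Suppose the line through `c` parallel to the tangent at `a` meets the interior of `K`; then some
boundary point `q` lies strictly beyond it, on the side away from `a`. Since `a` is smooth, `Γ`
contains points `p` arbitrarily close to `a`, on a prescribed side of the normal through `a`, with
`a - p` almost parallel to the tangent. In particular `Γ` is infinite, so the hypothesis on
6-point subsets passes to the set `{a, b, c, d, p, q}`. An admissible centre of a set containing
the parallelogram `abcd` must be its centre, for otherwise some vertex would lie in the convex hull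
of its two neighbours and a reflected vertex. Reflecting `p` through this centre gives the point
`c + (a - p)`, and for the right choice of side `c` lies in the triangle it spans with `a` and `q`,
so `c` is not an extreme point.
-/

open Set Module Filter Topology
open scoped RealInnerProductSpace

section Convex

variable {E : Type*} [AddCommGroup E] [Module ℝ E]

theorem mem_convexHull_triple_of_smul_add_eq_zero {x w₁ w₂ w₃ : E} {k₁ k₂ k₃ : ℝ}
    (h₁ : 0 ≤ k₁) (h₂ : 0 ≤ k₂) (h₃ : 0 ≤ k₃) (hk : 0 < k₁ + k₂ + k₃)
    (h : k₁ • (w₁ - x) + k₂ • (w₂ - x) + k₃ • (w₃ - x) = 0) :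
    x ∈ convexHull ℝ {w₁, w₂, w₃} := by
  set N := k₁ + k₂ + k₃
  have hx : x = (k₁ / N) • w₁ + (k₂ / N) • w₂ + (k₃ / N) • w₃ := by
    have hsum : k₁ • w₁ + k₂ • w₂ + k₃ • w₃ = N • x := by
      rw [← sub_eq_zero, ← h]; module
    rw [div_eq_inv_mul, div_eq_inv_mul, div_eq_inv_mul, mul_smul, mul_smul, mul_smul,
      ← smul_add, ← smul_add, hsum, smul_smul, inv_mul_cancel₀ hk.ne', one_smul]
  have hmem := (convex_convexHull ℝ ({w₁, w₂, w₃} : Set E)).sum_mem (t := Finset.univ)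
    (w := ![k₁ / N, k₂ / N, k₃ / N]) (z := ![w₁, w₂, w₃])
    (by intro i _; fin_cases i <;> simp <;> positivity)
    (by simp [Fin.sum_univ_three]; field_simp; rfl)
    (by intro i _; fin_cases i <;> apply subset_convexHull <;> simp)
  simpa [Fin.sum_univ_three, ← hx] using hmem

theorem mem_convexHull_add_smul_sub (v w w' : E) {α β : ℝ} (hα : 0 ≤ α) (hβ : 0 ≤ β) :
    v ∈ convexHull ℝ {v + α • (v - w) + β • (v - w'), w, w'} :=
  mem_convexHull_triple_of_smul_add_eq_zero zero_le_one hα hβ (by linarith) (by module)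

theorem notMem_convexHull_sdiff_of_mem_extremePoints {X : Set E} {x : E}
    (hx : x ∈ (convexHull ℝ X).extremePoints ℝ) : x ∉ convexHull ℝ (X \ {x}) := by
  have hconv := ((convex_convexHull ℝ X).mem_extremePoints_iff_convex_sdiff.mp hx).2
  intro h
  exact (convexHull_min (sdiff_subset_sdiff_left (subset_convexHull ℝ X)) hconv h).2 rfl

end Convex

section Plane

variable {E : Type*} [AddCommGroup E] [Module ℝ E] [Fact (finrank ℝ E = 2)]

theorem exists_smul_sub_add_smul_sub_eq_of_not_collinear {a b c : E}
    (h : ¬ Collinear ℝ {a, b, c}) (t : E) : ∃ α β : ℝ, α • (a - b) + β • (c - b) = t := by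
  have : FiniteDimensional ℝ E := .of_fact_finrank_eq_two
  rw [collinear_iff_finrank_le_one, not_le] at h
  have htop : vectorSpan ℝ {a, b, c} = ⊤ :=
    Submodule.eq_top_of_finrank_eq
      (le_antisymm (Submodule.finrank_le _) (by rw [Fact.out (p := finrank ℝ E = 2)]; omega))
  have ht : t ∈ vectorSpan ℝ {a, b, c} := htop ▸ Submodule.mem_top
  rw [vectorSpan_eq_span_vsub_set_right ℝ (mem_insert_of_mem a (mem_insert b {c}))] at ht
  simp only [image_insert_eq, image_singleton, vsub_eq_sub, sub_self] at ht
  rw [Submodule.mem_span_insert, Submodule.span_insert_zero] at ht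
  obtain ⟨α, z, hz, rfl⟩ := ht
  obtain ⟨β, rfl⟩ := Submodule.mem_span_singleton.mp hz
  exact ⟨α, β, rfl⟩

end Plane

section Topology

variable {E : Type*} [AddCommGroup E] [Module ℝ E] [TopologicalSpace E]
  [IsTopologicalAddGroup E] [ContinuousSMul ℝ E]

theorem exists_pos_add_smul_mem_of_mem_interior {K : Set E} {p : E} (hp : p ∈ interior K)
    (w : E) : ∃ s > (0 : ℝ), p + s • w ∈ K := by
  have hlim : Tendsto (fun s : ℝ => p + s • w) (𝓝[>] 0) (𝓝 p) := by
    have hc : Continuous fun s : ℝ => p + s • w := by fun_prop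
    simpa using (hc.tendsto 0).mono_left nhdsWithin_le_nhds
  obtain ⟨s, hsK, hs⟩ :=
    ((hlim.eventually (mem_interior_iff_mem_nhds.mp hp)).and self_mem_nhdsWithin).exists
  exact ⟨s, hs, hsK⟩

end Topology

section InnerProductSpace

variable {E : Type*} [NormedAddCommGroup E] [InnerProductSpace ℝ E]

theorem IsCompact.exists_mem_frontier_inner_le {K S : Set E} {w x : E} (hK : IsCompact K)
    (hS : IsClosed S) (hSw : ∀ y ∈ S, ∀ s : ℝ, y + s • w ∈ S) (hw : w ≠ 0) (hxK : x ∈ K)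
    (hxS : x ∈ S) : ∃ p ∈ frontier K, p ∈ S ∧ ⟪w, x⟫ ≤ ⟪w, p⟫ := by
  have hf : Continuous fun y : E => ⟪w, y⟫ := continuous_const.inner continuous_id
  obtain ⟨p, ⟨hpK, hpS⟩, hmax⟩ :=
    (hK.inter_right hS).exists_isMaxOn ⟨x, hxK, hxS⟩ hf.continuousOn
  rw [isMaxOn_iff] at hmax
  refine ⟨p, ⟨subset_closure hpK, fun hp => ?_⟩, hpS, hmax x ⟨hxK, hxS⟩⟩
  obtain ⟨s, hs, hsK⟩ := exists_pos_add_smul_mem_of_mem_interior hp w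
  have := hmax _ ⟨hsK, hSw p hpS s⟩
  rw [inner_add_right, real_inner_smul_right, real_inner_self_eq_norm_sq] at this
  have : 0 < s * ‖w‖ ^ 2 := by positivity
  linarith

def coordDet (u v x y : E) : ℝ := ⟪u, x⟫ * ⟪v, y⟫ - ⟪v, x⟫ * ⟪u, y⟫

theorem coordDet_neg (u v x y : E) : coordDet u (-v) x y = -coordDet u v x y := by
  simp only [coordDet, inner_neg_left]; ring

variable [Fact (finrank ℝ E = 2)]

theorem exists_ne_zero_inner_eq_zero {u : E} (hu : u ≠ 0) : ∃ v ≠ 0, ⟪u, v⟫ = 0 := by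
  have hfin : finrank ℝ (ℝ ∙ u)ᗮ = 1 := Submodule.finrank_orthogonal_span_singleton hu
  obtain ⟨v, hv, hv0⟩ := Submodule.exists_mem_ne_zero_of_ne_bot (p := (ℝ ∙ u)ᗮ)
    fun h => by rw [h, finrank_bot] at hfin; exact zero_ne_one hfin
  exact ⟨v, hv0, Submodule.mem_orthogonal_singleton_iff_inner_right.mp hv⟩

theorem eq_zero_of_inner_eq_zero_of_inner_eq_zero {u v w : E} (hu : u ≠ 0) (hv : v ≠ 0)
    (huv : ⟪u, v⟫ = 0) (hw₁ : ⟪u, w⟫ = 0) (hw₂ : ⟪v, w⟫ = 0) : w = 0 := by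
  obtain ⟨s, rfl⟩ := Submodule.mem_span_singleton.mp
    (Submodule.mem_span_singleton_of_inner_eq_zero_of_inner_eq_zero hu hv hw₁ huv)
  rw [real_inner_smul_right, real_inner_self_eq_norm_sq] at hw₂
  simp_all

theorem coordDet_smul_add_coordDet_smul_add_coordDet_smul {u v : E} (hu : u ≠ 0) (hv : v ≠ 0)
    (huv : ⟪u, v⟫ = 0) (x y z : E) :
    coordDet u v y z • x + coordDet u v z x • y + coordDet u v x y • z = 0 := by
  apply eq_zero_of_inner_eq_zero_of_inner_eq_zero hu hv huv <;>
  · simp only [coordDet, inner_add_right, real_inner_smul_right]; ring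

theorem exists_orthogonal_coordDet_nonneg {u : E} (hu : u ≠ 0) (x y : E) :
    ∃ v ≠ 0, ⟪u, v⟫ = 0 ∧ 0 ≤ coordDet u v x y := by
  obtain ⟨v, hv, huv⟩ := exists_ne_zero_inner_eq_zero hu
  rcases le_total 0 (coordDet u v x y) with h | h
  · exact ⟨v, hv, huv, h⟩
  · exact ⟨-v, neg_ne_zero.mpr hv, by rw [inner_neg_right, huv, neg_zero],
      by rw [coordDet_neg]; linarith⟩

theorem exists_pos_forall_mem_convexHull {u v : E} (hu : u ≠ 0) (hv : v ≠ 0)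
    (huv : ⟪u, v⟫ = 0) {a c q : E} (ha : ⟪u, c⟫ < ⟪u, a⟫) (hq : ⟪u, q⟫ < ⟪u, c⟫)
    (horient : 0 ≤ coordDet u v (a - c) (q - c)) :
    ∃ ε > 0, ∀ p, 0 < ⟪v, p - a⟫ → ⟪u, p⟫ ≤ ⟪u, a⟫ → -(ε * ⟪v, p - a⟫) < ⟪u, p - a⟫ →
      c ∈ convexHull ℝ {a + c - p, a, q} := by
  have hA : 0 < ⟪u, a - c⟫ := by rw [inner_sub_right]; linarith
  have hQ : 0 < -⟪u, q - c⟫ := by rw [inner_sub_right]; linarith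
  obtain ⟨ε₁, hε₁, hA'⟩ := exists_pos_mul_lt hA |⟪v, a - c⟫|
  obtain ⟨ε₂, hε₂, hQ'⟩ := exists_pos_mul_lt hQ |⟪v, q - c⟫|
  refine ⟨min ε₁ ε₂, lt_min hε₁ hε₂, fun p hp hpa hslope => ?_⟩
  set ε := min ε₁ ε₂
  have hεA : |⟪v, a - c⟫| * ε < ⟪u, a - c⟫ :=
    (mul_le_mul_of_nonneg_left (min_le_left _ _) (abs_nonneg _)).trans_lt hA'
  have hεQ : |⟪v, q - c⟫| * ε < -⟪u, q - c⟫ :=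
    (mul_le_mul_of_nonneg_left (min_le_right _ _) (abs_nonneg _)).trans_lt hQ'
  have hP : a + c - p - c = a - p := by abel
  set s := ⟪v, p - a⟫
  have hvP : ⟪v, a - p⟫ = -s := by rw [← inner_neg_right, neg_sub]
  have huP₀ : 0 ≤ ⟪u, a - p⟫ := by rw [inner_sub_right]; linarith
  have huP : ⟪u, a - p⟫ < ε * s := by rw [← neg_sub, inner_neg_right]; linarith
  -- the barycentric weights are the three determinants of Cramer's rule; the slope bound on
  -- `a - p` is what makes the two of them involving `a - p` positive
  have hk₂ : 0 < coordDet u v (q - c) (a - p) := by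
    have h₁ : ⟪v, q - c⟫ * ⟪u, a - p⟫ ≤ |⟪v, q - c⟫| * ⟪u, a - p⟫ :=
      mul_le_mul_of_nonneg_right (le_abs_self _) huP₀
    have h₂ : |⟪v, q - c⟫| * ⟪u, a - p⟫ ≤ |⟪v, q - c⟫| * (ε * s) :=
      mul_le_mul_of_nonneg_left huP.le (abs_nonneg _)
    have h₃ : |⟪v, q - c⟫| * ε * s < -⟪u, q - c⟫ * s := mul_lt_mul_of_pos_right hεQ hp
    rw [coordDet, hvP]; linarith
  have hk₃ : 0 < coordDet u v (a - p) (a - c) := by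
    have h₁ : ⟪u, a - p⟫ * -|⟪v, a - c⟫| ≤ ⟪u, a - p⟫ * ⟪v, a - c⟫ :=
      mul_le_mul_of_nonneg_left (neg_abs_le _) huP₀
    have h₂ : |⟪v, a - c⟫| * ⟪u, a - p⟫ ≤ |⟪v, a - c⟫| * (ε * s) :=
      mul_le_mul_of_nonneg_left huP.le (abs_nonneg _)
    have h₃ : |⟪v, a - c⟫| * ε * s < ⟪u, a - c⟫ * s := mul_lt_mul_of_pos_right hεA hp
    rw [coordDet, hvP]; linarith
  refine mem_convexHull_triple_of_smul_add_eq_zero horient hk₂.le hk₃.le (by linarith) ?_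
  rw [hP]
  exact coordDet_smul_add_coordDet_smul_add_coordDet_smul hu hv huv _ _ _

end InnerProductSpace

theorem Set.infinite_of_forall_exists_pos_le {α : Type*} {s : Set α} (f : α → ℝ)
    (h : ∀ δ > 0, ∃ x ∈ s, 0 < f x ∧ f x ≤ δ) : s.Infinite := by
  intro hs
  obtain ⟨x₀, hx₀s, hx₀, -⟩ := h 1 one_pos
  obtain ⟨x, ⟨-, hx⟩, hmin⟩ :=
    (s ∩ {x | 0 < f x}).exists_min_image f (hs.inter_of_left _) ⟨x₀, hx₀s, hx₀⟩
  obtain ⟨y, hys, hy, hyx⟩ := h (f x / 2) (half_pos hx)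
  linarith [hmin y ⟨hys, hy⟩]

instance : Fact (finrank ℝ Pt = 2) := ⟨finrank_euclideanSpace_fin⟩

theorem InConvexPos.mono {S T : Set Pt} (hT : InConvexPos T) (hST : S ⊆ T) : InConvexPos S :=
  fun p hp => inter_extremePoints_subset_extremePoints_of_subset (convexHull_mono hST)
    ⟨subset_convexHull ℝ S hp, hT p (hST hp)⟩

theorem InConvexPos.notMem_convexHull_triple {X : Set Pt} (hX : InConvexPos X)
    {x w₁ w₂ w₃ : Pt} (hx : x ∈ X) (h₁ : w₁ ∈ X \ {x}) (h₂ : w₂ ∈ X \ {x})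
    (h₃ : w₃ ∈ X \ {x}) : x ∉ convexHull ℝ {w₁, w₂, w₃} := fun h =>
  notMem_convexHull_sdiff_of_mem_extremePoints (hX x hx)
    (convexHull_mono (insert_subset h₁ (insert_subset h₂ (singleton_subset_iff.mpr h₃))) h)

theorem AdmissibleCenter.mono {O : Pt} {S T : Set Pt} (hT : AdmissibleCenter O T)
    (hST : S ⊆ T) : AdmissibleCenter O S :=
  InConvexPos.mono hT (union_subset_union hST (image_mono hST))

theorem cscPos_of_card_le {Γ : Set Pt} (hΓ : Γ.Infinite) {n : ℕ}
    (hcsc : ∀ Y : Finset Pt, (↑Y : Set Pt) ⊆ Γ → Y.card = n → CSCPos ↑Y)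
    {Y : Finset Pt} (hY : (↑Y : Set Pt) ⊆ Γ) (hn : Y.card ≤ n) : CSCPos ↑Y := by
  obtain ⟨Z, hZ, hZcard⟩ := (hΓ.sdiff Y.finite_toSet).exists_subset_card_eq (n - Y.card)
  have hdisj : Disjoint Y Z := by
    rw [← Finset.disjoint_coe]
    exact disjoint_of_subset_right hZ disjoint_sdiff_right
  obtain ⟨O, hO⟩ := hcsc (Y ∪ Z) (by push_cast; exact union_subset hY (hZ.trans sdiff_subset))
    (by rw [Finset.card_union_of_disjoint hdisj]; omega)
  exact ⟨O, hO.mono (by simp)⟩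

theorem AdmissibleCenter.two_smul_eq_add_of_parallelogram {S : Set Pt} {O a b c d : Pt}
    (hO : AdmissibleCenter O S) (ha : a ∈ S) (hb : b ∈ S) (hc : c ∈ S) (hd : d ∈ S)
    (hpar : a + c = b + d) (hnd : ¬ Collinear ℝ {a, b, c}) : (2 : ℝ) • O = a + c := by
  by_contra hne
  obtain ⟨α, β, ht⟩ := exists_smul_sub_add_smul_sub_eq_of_not_collinear hnd ((2 : ℝ) • O - (a + c))
  set t := α • (a - b) + β • (c - b)
  have ht0 : t ≠ 0 := by rw [ht]; exact sub_ne_zero.mpr hne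
  -- a vertex `v` with neighbours `w, w'` and opposite vertex `o`, with `t` in its outer cone,
  -- lies in the hull of `w`, `w'` and the reflection `2O - o = v + t`
  have hvertex : ∀ v o w w' : Pt, v ∈ S → o ∈ S → w ∈ S → w' ∈ S → w ≠ v → w' ≠ v →
      a + c = v + o → ∀ α' β' : ℝ, 0 ≤ α' → 0 ≤ β' → α' • (v - w) + β' • (v - w') = t →
      False := by
    intro v o w w' hv ho hw hw' hwv hw'v hvo α' β' hα' hβ' hdec
    have hrefl : (2 : ℝ) • O - o = v + α' • (v - w) + β' • (v - w') := by
      linear_combination (norm := module) ht.symm - hdec + hvo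
    have hmem : v + α' • (v - w) + β' • (v - w') ∈ S ∪ reflSet O S :=
      hrefl ▸ Or.inr ⟨o, ho, rfl⟩
    have hne : v + α' • (v - w) + β' • (v - w') ≠ v := by
      rw [add_assoc, hdec]; simpa using ht0
    exact hO.notMem_convexHull_triple (Or.inl hv) ⟨hmem, hne⟩ ⟨Or.inl hw, hwv⟩
      ⟨Or.inl hw', hw'v⟩ (mem_convexHull_add_smul_sub v w w' hα' hβ')
  have hab : a ≠ b := fun h =>
    hnd (by rw [h, insert_eq_of_mem (mem_insert b _)]; exact collinear_pair ℝ b c)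
  have hcb : c ≠ b := fun h => hnd (by rw [h, pair_eq_singleton]; exact collinear_pair ℝ a b)
  have hdc : a + c - b ≠ c := fun h => hab (by rw [← sub_eq_zero] at h ⊢; rw [← h]; abel)
  have hda : a + c - b ≠ a := fun h => hcb (by rw [← sub_eq_zero] at h ⊢; rw [← h]; abel)
  obtain rfl : d = a + c - b := by rw [hpar]; abel
  rcases le_total α 0 with hα | hα <;> rcases le_total β 0 with hβ | hβ
  · exact hvertex b _ a c hb hd ha hc hab hcb (by abel) (-α) (-β) (by linarith) (by linarith)
      (by module)
  · exact hvertex c a _ b hc ha hd hb hdc hcb.symm (by abel) (-α) β (by linarith) hβ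
      (by module)
  · exact hvertex a c b _ ha hc hb hd hab.symm hda rfl α (-β) hα (by linarith)
      (by module)
  · exact hvertex _ b c a hd hb hc ha hdc.symm hda.symm (by abel) α β hα hβ (by module)

section SmoothPoint

variable {K : Set Pt} {u a v : Pt}

theorem exists_mem_slope_gt_of_smooth (hsupa : IsSupportNormalAt K u a)
    (hsmooth : ∀ w : Pt, w ≠ 0 → IsSupportNormalAt K w a → ∃ t : ℝ, w = t • u)
    (hv : v ≠ 0) (huv : ⟪u, v⟫ = 0) {ε : ℝ} (hε : 0 < ε) :
    ∃ x ∈ K, 0 < ⟪v, x - a⟫ ∧ -(ε * ⟪v, x - a⟫) < ⟪u, x - a⟫ := by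
  by_contra! h
  have hnormal : IsSupportNormalAt K (u + ε • v) a := by
    refine ⟨hsupa.1, fun x hx => ?_⟩
    have hu : ⟪u, x - a⟫ ≤ 0 := by rw [inner_sub_right]; linarith [hsupa.2 x hx]
    have : ⟪u, x - a⟫ + ε * ⟪v, x - a⟫ ≤ 0 := by
      rcases le_or_gt ⟪v, x - a⟫ 0 with hxv | hxv
      · nlinarith
      · linarith [h x hx hxv]
    simp only [inner_add_left, real_inner_smul_left, inner_sub_right] at this ⊢
    linarith
  obtain ⟨t, ht⟩ : ∃ t : ℝ, u + ε • v = t • u := by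
    by_cases h0 : u + ε • v = 0
    · exact ⟨0, by rw [h0, zero_smul]⟩
    · exact hsmooth _ h0 hnormal
  have := congrArg (fun w => ⟪w, v⟫) ht
  simp only [inner_add_left, real_inner_smul_left, huv, real_inner_self_eq_norm_sq] at this
  have : 0 < ε * ‖v‖ ^ 2 := by positivity
  linarith

theorem exists_mem_frontier_slope_gt_of_smooth (hK : IsCompact K) (hconv : Convex ℝ K)
    (hsupa : IsSupportNormalAt K u a)
    (hsmooth : ∀ w : Pt, w ≠ 0 → IsSupportNormalAt K w a → ∃ t : ℝ, w = t • u)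
    (hu : u ≠ 0) (hv : v ≠ 0) (huv : ⟪u, v⟫ = 0) {ε δ : ℝ} (hε : 0 < ε) (hδ : 0 < δ) :
    ∃ p ∈ frontier K, 0 < ⟪v, p - a⟫ ∧ ⟪v, p - a⟫ ≤ δ ∧ -(ε * ⟪v, p - a⟫) < ⟪u, p - a⟫ := by
  obtain ⟨x, hxK, hxv, hxu⟩ := exists_mem_slope_gt_of_smooth hsupa hsmooth hv huv hε
  -- both conditions are invariant under homothety centred at `a`, so we can move `x` towards `a`
  set s := min 1 (δ / ⟪v, x - a⟫)
  have hs : 0 < s := lt_min one_pos (div_pos hδ hxv)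
  have hsδ : s * ⟪v, x - a⟫ ≤ δ := (le_div_iff₀ hxv).mp (min_le_right _ _)
  have hyK : a + s • (x - a) ∈ K := hconv.add_smul_sub_mem hsupa.1 hxK ⟨hs.le, min_le_left _ _⟩
  obtain ⟨p, hp, hpv, hpu⟩ := hK.exists_mem_frontier_inner_le
    (S := {y | ⟪v, y⟫ = ⟪v, a + s • (x - a)⟫}) (isClosed_eq (by fun_prop) continuous_const)
    (fun y hy r => by
      rw [mem_ofPred_eq, inner_add_right, real_inner_smul_right, real_inner_comm u v, huv, mul_zero,
        add_zero]
      exact hy) hu hyK rfl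
  have hpv' : ⟪v, p - a⟫ = s * ⟪v, x - a⟫ := by
    rw [inner_sub_right, hpv, inner_add_right, real_inner_smul_right]; ring
  refine ⟨p, hp, hpv' ▸ mul_pos hs hxv, hpv' ▸ hsδ, ?_⟩
  rw [inner_add_right, real_inner_smul_right] at hpu
  rw [hpv', inner_sub_right u p a]
  nlinarith [mul_lt_mul_of_pos_left hxu hs]

end SmoothPoint

theorem stmt10_general (K : Set Pt) (hK : IsCompact K) (hconv : Convex ℝ K)
    (hcsc : ∀ Y : Finset Pt, (↑Y : Set Pt) ⊆ frontier K → Y.card = 6 → CSCPos ↑Y)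
    (a b c d : Pt) (ha : a ∈ frontier K) (hb : b ∈ frontier K)
    (hc : c ∈ frontier K) (hd : d ∈ frontier K)
    (u : Pt) (hu : u ≠ 0) (hsupa : IsSupportNormalAt K u a)
    -- `a` is a smooth point: every supporting normal at `a` is a multiple of `u`
    (hsmooth : ∀ w : Pt, w ≠ 0 → IsSupportNormalAt K w a → ∃ t : ℝ, w = t • u)
    (hpar : a + c = b + d) (hnd : ¬ Collinear ℝ {a, b, c}) :
    (∀ x ∈ K, (inner ℝ u x : ℝ) ≤ inner ℝ u c) ∨ (∀ x ∈ K, (inner ℝ u c : ℝ) ≤ inner ℝ u x) := by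
  by_contra! h
  obtain ⟨⟨y, hyK, hcy⟩, ⟨z, hzK, hzc⟩⟩ := h
  have hca : ⟪u, c⟫ < ⟪u, a⟫ := hcy.trans_le (hsupa.2 y hyK)
  obtain ⟨q, hq, -, hzq⟩ := hK.exists_mem_frontier_inner_le isClosed_univ
    (fun _ _ _ => mem_univ _) (neg_ne_zero.mpr hu) hzK (mem_univ z)
  have hqc : ⟪u, q⟫ < ⟪u, c⟫ := by rw [inner_neg_left, inner_neg_left] at hzq; linarith
  obtain ⟨v, hv, huv, horient⟩ := exists_orthogonal_coordDet_nonneg hu (a - c) (q - c)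
  obtain ⟨ε, hε, hmem⟩ := exists_pos_forall_mem_convexHull hu hv huv hca hqc horient
  have hnear δ (hδ : 0 < δ) :=
    exists_mem_frontier_slope_gt_of_smooth hK hconv hsupa hsmooth hu hv huv hε hδ
  have hΓ : (frontier K).Infinite := Set.infinite_of_forall_exists_pos_le (⟪v, · - a⟫)
    fun δ hδ => by obtain ⟨p, hp, h₁, h₂, -⟩ := hnear δ hδ; exact ⟨p, hp, h₁, h₂⟩
  obtain ⟨p, hp, hpv, -, hpu⟩ := hnear 1 one_pos
  obtain ⟨O, hO⟩ := cscPos_of_card_le hΓ hcsc (Y := {a, b, c, d, p, q})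
    (by simp [insert_subset_iff, *]) Finset.card_le_six
  have hO₂ := hO.two_smul_eq_add_of_parallelogram (by simp) (by simp) (by simp) (by simp) hpar hnd
  refine hO.notMem_convexHull_triple (Or.inl (by simp)) ⟨Or.inr ⟨p, by simp, by rw [hO₂]⟩, ?_⟩
    ⟨Or.inl (by simp), ?_⟩ ⟨Or.inl (by simp), ?_⟩
    (hmem p hpv (hsupa.2 p (hK.isClosed.frontier_subset hp)) hpu)
  · rw [mem_singleton_iff, sub_eq_iff_eq_add, add_comm c p, add_left_inj]
    rintro rfl
    simp at hpv
  · rintro rfl; exact hca.false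
  · rintro rfl; exact hqc.false

theorem stmt10 (K : Set Pt) (hK : IsCompact K) (hconv : Convex ℝ K)
    (hint : (interior K).Nonempty)
    (hcsc : ∀ Y : Finset Pt, (↑Y : Set Pt) ⊆ frontier K → Y.card = 6 → CSCPos ↑Y)
    (a b c d : Pt) (ha : a ∈ frontier K) (hb : b ∈ frontier K)
    (hc : c ∈ frontier K) (hd : d ∈ frontier K)
    (u : Pt) (hu : u ≠ 0) (hsupa : IsSupportNormalAt K u a)
    -- `a` is a smooth point: every supporting normal at `a` is a multiple of `u`
    (hsmooth : ∀ w : Pt, w ≠ 0 → IsSupportNormalAt K w a → ∃ t : ℝ, w = t • u)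
    (hpar : a + c = b + d) (hnd : ¬ Collinear ℝ {a, b, c})
    -- the sides of the parallelogram are not parallel to the tangent line at `a`
    (hside1 : (inner ℝ u (b - a) : ℝ) ≠ 0) (hside2 : (inner ℝ u (c - b) : ℝ) ≠ 0) :
    (∀ x ∈ K, (inner ℝ u x : ℝ) ≤ inner ℝ u c) ∨ (∀ x ∈ K, (inner ℝ u c : ℝ) ≤ inner ℝ u x) :=
  stmt10_general K hK hconv hcsc a b c d ha hb hc hd u hu hsupa hsmooth hpar hnd
end
end

section
/- Let K ⊆ ℝ² be a compact convex set with nonempty interior, and let p, x ∈ ∂K be distinct points such that the segment px is not an affine diameter of K (i.e., there do not exist parallel supporting lines of K at p and x). Then there exist points q, y ∈ ∂K such that pxqy is a nondegenerate parallelogram, i.e., p + q = x + y and p, x, q are not collinear. -/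
noncomputable section

/-!
Suppose there is no such parallelogram and put `v = x - p`, `K' = K + v`. A common point of
`∂K` and `∂K'` other than `x` would give a parallelogram, unless it lies on the line `px`; that
line meets the interior of `K` (otherwise `px` lies on a supporting line), so it meets `∂K` only
in `p` and `x`, whence `∂K ∩ ∂K' = {x}`. The lens `M = K ∩ K'` has interior points (otherwise a
line separating `K` from `K'` gives parallel supporting lines at `p` and `x`), so `∂M \ {x}`,
a circle minus a point, is connected. It is covered by the disjoint relatively open sets
`∂M \ ∂K ⊆ ∂K'` and `∂M \ ∂K' ⊆ ∂K`, so one of them is empty; but `∂M ⊆ ∂K` forces `K ⊆ M ⊆ K + v`,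
and `∂M ⊆ ∂K'` forces `K + v ⊆ K`, both impossible for a compact `K` and `v ≠ 0`.
-/

open Set Metric AffineMap Pointwise

theorem frontier_vadd {X G : Type*} [TopologicalSpace X] [AddGroup G] [AddAction G X]
    [ContinuousConstVAdd G X] (c : G) (s : Set X) : frontier (c +ᵥ s) = c +ᵥ frontier s :=
  ((Homeomorph.vadd c).image_frontier s).symm

theorem frontier_inter_subset_left_or_right {X : Type*} [TopologicalSpace X] {K L : Set X} {x : X}
    (hKL : frontier K ∩ frontier L = {x}) (hconn : IsPreconnected (frontier (K ∩ L) \ {x})) :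
    frontier (K ∩ L) ⊆ frontier K ∨ frontier (K ∩ L) ⊆ frontier L := by
  have hx : x ∈ frontier K ∩ frontier L := hKL.superset (mem_singleton x)
  by_contra! h
  obtain ⟨⟨z₁, hz₁, hz₁K⟩, ⟨z₂, hz₂, hz₂L⟩⟩ := And.intro (not_subset.1 h.1) (not_subset.1 h.2)
  have hcover : frontier (K ∩ L) \ {x} ⊆ (frontier L)ᶜ ∪ (frontier K)ᶜ := by
    rintro z ⟨-, hzx⟩
    rwa [← compl_inter, inter_comm, hKL]
  obtain ⟨z, ⟨hz, -⟩, hzL, hzK⟩ := hconn _ _ isClosed_frontier.isOpen_compl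
    isClosed_frontier.isOpen_compl hcover
    ⟨z₂, ⟨hz₂, fun h => hz₂L (h ▸ hx.2)⟩, hz₂L⟩ ⟨z₁, ⟨hz₁, fun h => hz₁K (h ▸ hx.1)⟩, hz₁K⟩
  rcases frontier_inter_subset K L hz with hz | hz
  exacts [hzK hz.1, hzL hz.2]

theorem isPreconnected_sphere_diff_singleton {E : Type*} [NormedAddCommGroup E]
    [InnerProductSpace ℝ E] {v : E} (hv : ‖v‖ = 1) : IsPreconnected (sphere (0 : E) 1 \ {v}) := by
  have hsource : IsPreconnected (stereographic hv).source := by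
    rw [← (stereographic hv).symm_image_target_eq_source, stereographic_target]
    exact convex_univ.isPreconnected.image _ (stereographic hv).continuousOn_symm
  convert hsource.image _ continuous_subtype_val.continuousOn
  ext z
  simp [stereographic_source, and_comm]

theorem Convex.isPreconnected_frontier_diff_singleton {E : Type*} [NormedAddCommGroup E]
    [InnerProductSpace ℝ E] {M : Set E} (hc : Convex ℝ M) (hne : (interior M).Nonempty)
    (hb : Bornology.IsBounded M) {x : E} (hx : x ∈ frontier M) :
    IsPreconnected (frontier M \ {x}) := by
  obtain ⟨h, -, -, hfr⟩ := exists_homeomorph_image_interior_closure_frontier_eq_unitBall hc hne hb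
  have hhx : ‖h x‖ = 1 := mem_sphere_zero_iff_norm.1 (hfr ▸ mem_image_of_mem h hx)
  rw [← h.isPreconnected_image, image_sdiff h.injective, hfr, image_singleton]
  exact isPreconnected_sphere_diff_singleton hhx

theorem IsCompact.not_vadd_subset_self {E : Type*} [NormedAddCommGroup E] [InnerProductSpace ℝ E]
    {K : Set E} (hK : IsCompact K) (hne : K.Nonempty) {v : E} (hv : v ≠ 0) : ¬ v +ᵥ K ⊆ K := by
  intro hsub
  have hcont : Continuous fun z : E => (inner ℝ v z : ℝ) := continuous_const.inner continuous_id
  obtain ⟨m, hm, hmax⟩ := hK.exists_isMaxOn hne hcont.continuousOn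
  have : (inner ℝ v (v + m) : ℝ) ≤ inner ℝ v m := hmax (hsub (vadd_mem_vadd_set hm))
  rw [inner_add_right, real_inner_self_eq_norm_sq] at this
  have := norm_pos_iff.2 hv
  nlinarith

section Convex

variable {E : Type*} [AddCommGroup E] [Module ℝ E] [TopologicalSpace E] [IsTopologicalAddGroup E]
  [ContinuousSMul ℝ E]

theorem Convex.subset_of_interior_subset {K C : Set E} (hK : Convex ℝ K)
    (hint : (interior K).Nonempty) (hC : IsClosed C) (h : interior K ⊆ C) : K ⊆ C :=
  subset_closure.trans <| hK.closure_interior_eq_closure_of_nonempty_interior hint ▸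
    closure_minimal h hC

theorem Convex.subset_of_frontier_subset {K M : Set E} (hK : Convex ℝ K) (hM : IsClosed M)
    (hMK : M ⊆ K) {o : E} (ho : o ∈ interior M) (hfr : frontier M ⊆ frontier K) : K ⊆ M := by
  intro k hk
  by_contra hkM
  have hcover : segment ℝ o k ⊆ interior M ∪ Mᶜ := by
    intro z hz
    by_contra! h
    simp only [mem_union, mem_compl_iff, not_or, not_not] at h
    have hzM : z ∈ frontier M := ⟨subset_closure h.2, h.1⟩
    have hzo : o ≠ z := fun hoz => h.1 (hoz ▸ ho)
    have hzk : k ≠ z := fun hkz => hkM (hkz ▸ hM.frontier_subset hzM)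
    exact (hfr hzM).2 (hK.openSegment_interior_self_subset_interior (interior_mono hMK ho) hk
      (mem_openSegment_of_ne_left_right hzo hzk hz))
  obtain ⟨z, -, hzint, hzM⟩ := (convex_segment o k).isPreconnected _ _ isOpen_interior
    hM.isOpen_compl hcover ⟨o, left_mem_segment ℝ o k, ho⟩ ⟨k, right_mem_segment ℝ o k, hkM⟩
  exact hzM (interior_subset hzint)

theorem lineMap_notMem_frontier_of_mem_openSegment {K : Set E} (hK : Convex ℝ K) {a b : E}
    {s r t : ℝ} (hs : lineMap a b s ∈ interior K) (hr : lineMap a b r ∈ K)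
    (ht : t ∈ openSegment ℝ s r) : lineMap a b t ∉ frontier K := fun hfr =>
  hfr.2 <| hK.openSegment_interior_self_subset_interior hs hr <|
    image_openSegment ℝ (lineMap a b) s r ▸ mem_image_of_mem _ ht

/-- `0 < (t - s) * (r - s)` says that `t` and `r` lie on the same side of `s`. -/
theorem eq_of_lineMap_mem_frontier {K : Set E} (hK : Convex ℝ K) (hKc : IsClosed K) {a b : E}
    {s t r : ℝ} (hs : lineMap a b s ∈ interior K) (ht : lineMap a b t ∈ frontier K)
    (hr : lineMap a b r ∈ frontier K) (hside : 0 < (t - s) * (r - s)) : t = r := by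
  wlog htr : t < r generalizing t r
  · rcases (not_lt.1 htr).lt_or_eq with h | h
    exacts [(this hr ht (by linarith) h).symm, h.symm]
  exfalso
  rcases lt_or_gt_of_ne (show t - s ≠ 0 by rintro h; simp [h] at hside) with h | h
  · refine lineMap_notMem_frontier_of_mem_openSegment hK hs (hKc.frontier_subset ht) ?_ hr
    rw [openSegment_symm, openSegment_eq_Ioo (by linarith)]
    exact ⟨htr, by nlinarith⟩
  · refine lineMap_notMem_frontier_of_mem_openSegment hK hs (hKc.frontier_subset hr) ?_ ht
    rw [openSegment_eq_Ioo (by linarith)]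
    exact ⟨by linarith, htr⟩

theorem eq_zero_or_one_of_lineMap_mem_frontier {K : Set E} (hK : Convex ℝ K) (hKc : IsClosed K)
    {p x : E} (hp : p ∈ frontier K) (hx : x ∈ frontier K) {t₀ : ℝ}
    (ht₀ : lineMap p x t₀ ∈ interior K) {t : ℝ} (ht : lineMap p x t ∈ frontier K) :
    t = 0 ∨ t = 1 := by
  rw [← lineMap_apply_zero p x (k := ℝ)] at hp
  rw [← lineMap_apply_one p x (k := ℝ)] at hx
  have hne : ∀ {s}, lineMap p x s ∈ frontier K → s ≠ t₀ := fun hs h => hs.2 (h ▸ ht₀)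
  have hpos : 0 < t₀ := by
    by_contra! h
    have := eq_of_lineMap_mem_frontier hK hKc ht₀ hp hx
      (mul_pos (by linarith [(hne hp).symm.lt_of_le h]) (by linarith))
    norm_num at this
  have hlt : t₀ < 1 := by
    by_contra! h
    have := eq_of_lineMap_mem_frontier hK hKc ht₀ hp hx
      (mul_pos_of_neg_of_neg (by linarith) (by linarith [(hne hx).lt_of_le h]))
    norm_num at this
  rcases (hne ht).lt_or_gt with h | h
  · exact .inl (eq_of_lineMap_mem_frontier hK hKc ht₀ ht hp (mul_pos_of_neg_of_neg (by linarith)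
      (by linarith)))
  · exact .inr (eq_of_lineMap_mem_frontier hK hKc ht₀ ht hx (mul_pos (by linarith) (by linarith)))

theorem frontier_inter_frontier_vadd_eq {K : Set E} (hK : Convex ℝ K) (hKc : IsClosed K) {p x : E}
    (hp : p ∈ frontier K) (hx : x ∈ frontier K) (hpx : p ≠ x) {t₀ : ℝ}
    (ht₀ : lineMap p x t₀ ∈ interior K)
    (hcol : ∀ q ∈ frontier K, q - (x - p) ∈ frontier K → Collinear ℝ {p, x, q}) :
    frontier K ∩ frontier ((x - p) +ᵥ K) = {x} := by
  ext z
  simp only [mem_inter_iff, frontier_vadd, mem_vadd_set_iff_neg_vadd_mem, vadd_eq_add,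
    neg_add_eq_sub, mem_singleton_iff]
  constructor
  · rintro ⟨hz, hz'⟩
    obtain ⟨t, rfl⟩ := mem_affineSpan_pair_iff_exists_lineMap_eq.1 <|
      (hcol z hz hz').mem_affineSpan_of_mem_of_ne (p₁ := p) (p₂ := x) (p₃ := z)
        (by simp) (by simp) (by simp) hpx
    have hshift : lineMap p x t - (x - p) = lineMap p x (t - 1) := by
      simp only [lineMap_apply_module']
      module
    rw [hshift] at hz'
    rcases eq_zero_or_one_of_lineMap_mem_frontier hK hKc hp hx ht₀ hz with rfl | rfl
    · rcases eq_zero_or_one_of_lineMap_mem_frontier hK hKc hp hx ht₀ hz' with h | h <;>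
        norm_num at h
    · exact lineMap_apply_one p x
  · rintro rfl
    exact ⟨hx, by rwa [sub_sub_cancel]⟩

end Convex

theorem isSupportNormalAt_toDual_symm {K : Set Pt} {f : StrongDual ℝ Pt} {z : Pt} (hz : z ∈ K)
    (hf : ∀ b ∈ K, f b ≤ f z) : IsSupportNormalAt K ((InnerProductSpace.toDual ℝ Pt).symm f) z :=
  ⟨hz, fun b hb => by simpa only [InnerProductSpace.toDual_symm_apply] using hf b hb⟩

theorem toDual_symm_ne_zero {f : StrongDual ℝ Pt} {a b : Pt} (hab : f a ≠ f b) :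
    (InnerProductSpace.toDual ℝ Pt).symm f ≠ 0 := by
  rw [Ne, LinearIsometryEquiv.map_eq_zero_iff]
  rintro rfl
  exact hab rfl

section SupportLines

variable {K : Set Pt} (hconv : Convex ℝ K) (hint : (interior K).Nonempty) {p x : Pt}
  (hp : p ∈ K) (hx : x ∈ K)
include hconv hint hp hx

theorem exists_isSupportNormalAt_of_lineMap_notMem_interior
    (h : ∀ t : ℝ, lineMap p x t ∉ interior K) :
    ∃ u : Pt, u ≠ 0 ∧ IsSupportNormalAt K u p ∧ IsSupportNormalAt K u x := by
  have hdisj : Disjoint (interior K) (line[ℝ, p, x] : Set Pt) := by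
    refine disjoint_right.2 fun z hz => ?_
    obtain ⟨t, rfl⟩ := mem_affineSpan_pair_iff_exists_lineMap_eq.1 hz
    exact h t
  obtain ⟨f, c, hfint, hfline⟩ := geometric_hahn_banach_open hconv.interior isOpen_interior
    (AffineSubspace.convex _) hdisj
  have hfK : ∀ b ∈ K, f b ≤ c := hconv.subset_of_interior_subset hint
    (isClosed_le f.continuous continuous_const) fun a ha => (hfint a ha).le
  have hfp : f p = c := (hfK p hp).antisymm (hfline p (left_mem_affineSpan_pair ℝ p x))
  have hfx : f x = c := (hfK x hx).antisymm (hfline x (right_mem_affineSpan_pair ℝ p x))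
  obtain ⟨o, ho⟩ := hint
  refine ⟨_, toDual_symm_ne_zero ((hfint o ho).trans_eq hfp.symm).ne,
    isSupportNormalAt_toDual_symm hp fun b hb => hfp ▸ hfK b hb,
    isSupportNormalAt_toDual_symm hx fun b hb => hfx ▸ hfK b hb⟩

theorem exists_isSupportNormalAt_of_interior_inter_vadd_eq_empty
    (h : interior K ∩ interior ((x - p) +ᵥ K) = ∅) :
    ∃ u : Pt, u ≠ 0 ∧ IsSupportNormalAt K u p ∧ IsSupportNormalAt K (-u) x := by
  set v := x - p
  rw [← disjoint_iff_inter_eq_empty] at h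
  obtain ⟨f, c, hfint, hfint'⟩ := geometric_hahn_banach_open_open hconv.interior isOpen_interior
    (hconv.vadd v).interior isOpen_interior h
  have hfK : ∀ b ∈ K, f b ≤ c := hconv.subset_of_interior_subset hint
    (isClosed_le f.continuous continuous_const) fun a ha => (hfint a ha).le
  have hfK' : ∀ b ∈ K, c ≤ f (v + b) := fun b hb =>
    (hconv.vadd v).subset_of_interior_subset (interior_vadd v K ▸ hint.vadd_set)
      (isClosed_le continuous_const f.continuous) (fun a ha => (hfint' a ha).le)
      (vadd_mem_vadd_set hb)
  have hxvp : x = v + p := (sub_add_cancel x p).symm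
  have hfx : f x = c := (hfK x hx).antisymm (hxvp ▸ hfK' p hp)
  obtain ⟨o, ho⟩ := hint
  refine ⟨_, toDual_symm_ne_zero (f := -f) (a := o) (b := x)
    (by rw [neg_apply, neg_apply, Ne, neg_inj]; exact ((hfint o ho).trans_eq hfx.symm).ne),
    isSupportNormalAt_toDual_symm hp fun b hb => ?_, ?_⟩
  · have := hfK' b hb
    rw [hxvp, map_add] at hfx
    simp only [neg_apply, map_add] at this ⊢
    linarith
  · rw [map_neg, neg_neg]
    exact isSupportNormalAt_toDual_symm hx fun b hb => hfx ▸ hfK b hb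

end SupportLines

theorem stmt12 (K : Set Pt) (hK : IsCompact K) (hconv : Convex ℝ K)
    (hint : (interior K).Nonempty)
    (p x : Pt) (hp : p ∈ frontier K) (hx : x ∈ frontier K) (hpx : p ≠ x)
    -- `px` is not an affine diameter: no parallel supporting lines at `p` and `x`
    (hdiam : ¬ ∃ u : Pt, u ≠ 0 ∧ IsSupportNormalAt K u p ∧
      (IsSupportNormalAt K u x ∨ IsSupportNormalAt K (-u) x)) :
    ∃ q y : Pt, q ∈ frontier K ∧ y ∈ frontier K ∧ p + q = x + y ∧
      ¬ Collinear ℝ {p, x, q} := by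
  by_contra! hcol
  set v := x - p with hv_def
  set M := K ∩ (v +ᵥ K)
  have hpK : p ∈ K := hK.isClosed.frontier_subset hp
  have hxK : x ∈ K := hK.isClosed.frontier_subset hx
  obtain ⟨t₀, ht₀⟩ : ∃ t₀ : ℝ, lineMap p x t₀ ∈ interior K := by
    by_contra! h
    obtain ⟨u, hu, hup, hux⟩ :=
      exists_isSupportNormalAt_of_lineMap_notMem_interior hconv hint hpK hxK h
    exact hdiam ⟨u, hu, hup, .inl hux⟩
  have hKK' : frontier K ∩ frontier (v +ᵥ K) = {x} := frontier_inter_frontier_vadd_eq hconv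
    hK.isClosed hp hx hpx ht₀ fun q hq hq' => hcol q (q - v) hq hq' (by rw [hv_def]; abel)
  obtain ⟨o, ho⟩ : (interior M).Nonempty := by
    rw [interior_inter, nonempty_iff_ne_empty]
    intro h
    obtain ⟨u, hu, hup, hux⟩ :=
      exists_isSupportNormalAt_of_interior_inter_vadd_eq_empty hconv hint hpK hxK h
    exact hdiam ⟨u, hu, hup, .inr hux⟩
  have hxM : x ∈ frontier M :=
    ⟨subset_closure ⟨hxK, p, hpK, sub_add_cancel x p⟩,
      fun h => hx.2 (interior_mono inter_subset_left h)⟩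
  have hMc : IsClosed M := hK.isClosed.inter (hK.vadd v).isClosed
  have hv : v ≠ 0 := sub_ne_zero.2 hpx.symm
  have hconn : IsPreconnected (frontier M \ {x}) :=
    (hconv.inter (hconv.vadd v)).isPreconnected_frontier_diff_singleton ⟨o, ho⟩
      (hK.isBounded.subset inter_subset_left) hxM
  rcases frontier_inter_subset_left_or_right hKK' hconn with h | h
  · have hsub : K ⊆ v +ᵥ K := (hconv.subset_of_frontier_subset hMc inter_subset_left ho h).trans
      inter_subset_right
    refine hK.not_vadd_subset_self ⟨p, hpK⟩ (neg_ne_zero.2 hv) ?_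
    rwa [vadd_set_subset_iff_subset_neg_vadd_set, neg_neg]
  · exact hK.not_vadd_subset_self ⟨p, hpK⟩ hv <|
      ((hconv.vadd v).subset_of_frontier_subset hMc inter_subset_right ho h).trans inter_subset_left
end
end

section
/- Let a, b, c be non-collinear points in ℝ² and suppose O is a point such that {a,b,c} ∪ {2O-a, 2O-b, 2O-c} is in convex position and O lies in the closed region bounded away from the triangle by the line through the midpoints (a+b)/2 and (c+b)/2 (the 'b-part'). Then the line through a and c supports the convex hull of {a,b,c} ∪ {2O-a,2O-b,2O-c}, i.e., all six points lie in one closed half-plane bounded by the line ac. -/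
noncomputable section

lemma aux16 (a b c O u : Pt) (α β γ : ℝ) (hsum : α + β + γ = 1)
    (hO : O = α • a + β • b + γ • c) (hβ : 1 / 2 ≤ β)
    (he : (inner ℝ u a : ℝ) = inner ℝ u c) (hba : (inner ℝ u b : ℝ) ≤ inner ℝ u a) :
    ∀ p ∈ ({a, b, c} : Set Pt) ∪ reflSet O {a, b, c}, (inner ℝ u p : ℝ) ≤ inner ℝ u a := by
  have hOi : (inner ℝ u O : ℝ) = α * inner ℝ u a + β * inner ℝ u b + γ * inner ℝ u c := by
    rw [hO]; simp [inner_add_right, real_inner_smul_right]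
  rw [← he] at hOi
  have h3 : (α + γ) * (inner ℝ u a : ℝ) = (1 - β) * inner ℝ u a := by
    rw [show α + γ = 1 - β by linarith]
  intro p hp
  rcases hp with hp | ⟨x, hx, rfl⟩
  · rcases hp with rfl | rfl | rfl
    · exact le_refl _
    · exact hba
    · exact he.ge
  · have h2 : (inner ℝ u ((2:ℝ) • O - x) : ℝ) = 2 * inner ℝ u O - inner ℝ u x := by
      simp [inner_sub_right, real_inner_smul_right]
    rcases hx with rfl | rfl | rfl <;> rw [h2, hOi] <;>
      nlinarith [h3, he,
        mul_nonneg (show (0:ℝ) ≤ β by linarith) (sub_nonneg.mpr hba),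
        mul_nonneg (show (0:ℝ) ≤ 2*β - 1 by linarith) (sub_nonneg.mpr hba)]

theorem stmt16 (a b c : Pt) (hnc : ¬ Collinear ℝ {a, b, c}) (O : Pt)
    (hadm : AdmissibleCenter O {a, b, c})
    (hb : ∃ α β γ : ℝ, α + β + γ = 1 ∧ O = α • a + β • b + γ • c ∧ 1 / 2 ≤ β) :
    ∃ u : Pt, u ≠ 0 ∧ (inner ℝ u a : ℝ) = inner ℝ u c ∧
      ∀ p ∈ ({a, b, c} : Set Pt) ∪ reflSet O {a, b, c}, (inner ℝ u p : ℝ) ≤ inner ℝ u a := by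
  obtain ⟨α, β, γ, hsum, hO, hβ⟩ := hb
  have hac : a ≠ c := by
    rintro rfl
    apply hnc
    have hset : ({a, b, a} : Set Pt) = {a, b} := by
      ext x; simp only [Set.mem_insert_iff, Set.mem_singleton_iff]; tauto
    rw [hset]
    exact collinear_pair ℝ a b
  set v : Pt := a - c with hv
  have hvne : v ≠ 0 := sub_ne_zero.mpr hac
  set u0 : Pt := !₂[-(v 1), v 0] with hu0
  have hu0ne : u0 ≠ 0 := by
    intro h
    apply hvne
    ext i
    fin_cases i
    · simpa [hu0] using congrArg (fun w : Pt => w 1) h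
    · simpa [hu0] using congrArg (fun w : Pt => w 0) h
  have hinner : ∀ x y : Pt, (inner ℝ x y : ℝ) = x 0 * y 0 + x 1 * y 1 := by
    intro x y
    simp [PiLp.inner_apply, Fin.sum_univ_two, RCLike.inner_apply, mul_comm]
  have horth : (inner ℝ u0 a : ℝ) = inner ℝ u0 c := by
    rw [hinner, hinner]
    have h0 : u0 0 = -(a 1 - c 1) := by simp [hu0, hv]
    have h1 : u0 1 = a 0 - c 0 := by simp [hu0, hv]
    rw [h0, h1]; ring
  rcases le_total (inner ℝ u0 b : ℝ) (inner ℝ u0 a) with h | h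
  · exact ⟨u0, hu0ne, horth, aux16 a b c O u0 α β γ hsum hO hβ horth h⟩
  · refine ⟨-u0, neg_ne_zero.mpr hu0ne, ?_, ?_⟩
    · rw [inner_neg_left, inner_neg_left, horth]
    · have he' : (inner ℝ (-u0) a : ℝ) = inner ℝ (-u0) c := by
        rw [inner_neg_left, inner_neg_left, horth]
      have hba' : (inner ℝ (-u0) b : ℝ) ≤ inner ℝ (-u0) a := by
        rw [inner_neg_left, inner_neg_left]; linarith
      exact aux16 a b c O (-u0) α β γ hsum hO hβ he' hba'
end
end
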